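/- arXiv:1106.6013 — 2 statements merged into one kernel-verified Lean document; each statement's English description precedes it below -/
import Mathlib

section
/- Suppose r(x) ≥ 0 a.e. on [a,b] and ∫_a^b r > 0. If u and z are nontrivial real solutions on [a,b] of -(p u')' + q u = λ r u and -(p z')' + q z = μ r z respectively with real λ < μ, and u(x₁) = u(x₂) = 0 for consecutive zeros x₁ < x₂ of u with r not a.e. zero on (x₁,x₂), then z has a zero in (x₁, x₂). -/
open MeasureTheory

/-- Real solution of `-(p y')' + q y = λ r y` on `[a,b]` in the absolutely
continuous (Carathéodory) sense, with quasi-derivative `py = p·y'`. -/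
def IsRealSLSolution (p q r : ℝ → ℝ) (a b : ℝ) (l : ℝ) (y py : ℝ → ℝ) : Prop :=
  (∀ x ∈ Set.Icc a b, y x = y a + ∫ t in a..x, py t / p t) ∧
  (∀ x ∈ Set.Icc a b, py x = py a + ∫ t in a..x, (q t * y t - l * r t * y t))

/-!
Integrating the Lagrange identity `(pu z - u pz)' = (m - l) r u z` over an arch `(x₁, x₂)` on which
`u > 0` gives `pu(x₂) z(x₂) - pu(x₁) z(x₁) = (m - l) ∫ r u z`. If `z > 0` on the arch, the right
side is positive, whereas `pu(x₁) ≥ 0 ≥ pu(x₂)` and `z ≥ 0` at the ends make the left side `≤ 0`.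

Because the equation is posed in integral form, where a non-integrable integrand has integral `0`,
one first has to show that solutions are absolutely continuous on all of `[a, b]`: a Gronwall
estimate bounds `py` up to the largest `c` with `py / p` integrable on `[a, c]`, and beyond such a
`c < b` the solution `y` would be constant, which forces `c = b`.
-/

open Set Filter Topology intervalIntegral

lemma continuousOn_of_eq_add_integral {Y f : ℝ → ℝ} {a b c : ℝ}
    (hf : IntervalIntegrable f volume a b) (hY : ∀ x ∈ Icc a b, Y x = c + ∫ t in a..x, f t) :
    ContinuousOn Y (Icc a b) :=
  ((continuousOn_const.add (continuousOn_primitive_interval' hf left_mem_uIcc)).mono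
    Icc_subset_uIcc).congr hY

lemma eq_add_integral_of_eq_add_integral {Y f : ℝ → ℝ} {a b c : ℝ}
    (hf : IntervalIntegrable f volume a b) (hY : ∀ x ∈ Icc a b, Y x = c + ∫ t in a..x, f t)
    {x₀ x : ℝ} (hx₀ : x₀ ∈ Icc a b) (hx : x ∈ Icc a b) :
    Y x = Y x₀ + ∫ t in x₀..x, f t := by
  rw [hY x hx, hY x₀ hx₀, add_assoc, integral_add_adjacent_intervals
    (hf.mono_set (uIcc_subset_uIcc left_mem_uIcc (Icc_subset_uIcc hx₀)))
    (hf.mono_set (uIcc_subset_uIcc (Icc_subset_uIcc hx₀) (Icc_subset_uIcc hx)))]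

lemma intervalIntegrable_sub_of_continuousOn {q r y : ℝ → ℝ} {a b : ℝ} (l : ℝ) (hab : a ≤ b)
    (hq : IntervalIntegrable q volume a b) (hr : IntervalIntegrable r volume a b)
    (hy : ContinuousOn y (Icc a b)) :
    IntervalIntegrable (fun t => q t * y t - l * r t * y t) volume a b := by
  rw [← uIcc_of_le hab] at hy
  exact (hq.mul_continuousOn hy).sub ((hr.const_mul l).mul_continuousOn hy)

lemma intervalIntegrable_div_of_continuousOn {p py : ℝ → ℝ} {a b : ℝ} (hab : a ≤ b)
    (hip : IntervalIntegrable (fun t => (p t)⁻¹) volume a b) (hpy : ContinuousOn py (Icc a b)) :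
    IntervalIntegrable (fun t => py t / p t) volume a b := by
  rw [← uIcc_of_le hab] at hpy
  simpa only [div_eq_mul_inv] using hip.continuousOn_mul hpy

lemma abs_div_add_abs_sub_le {p q r l y py M : ℝ} (hy : |y| ≤ M) (hpy : |py| ≤ M) :
    |py / p| + |q * y - l * r * y| ≤ M * (|p⁻¹| + |q| + |l| * |r|) := by
  have h₁ : |py / p| ≤ M * |p⁻¹| := by
    rw [div_eq_mul_inv, abs_mul]
    exact mul_le_mul_of_nonneg_right hpy (abs_nonneg _)
  have h₂ : |q * y - l * r * y| ≤ (|q| + |l| * |r|) * M :=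
    calc |q * y - l * r * y| ≤ |q| * |y| + |l| * |r| * |y| := by
          simpa only [abs_mul] using abs_sub (q * y) (l * r * y)
      _ = (|q| + |l| * |r|) * |y| := by ring
      _ ≤ (|q| + |l| * |r|) * M := mul_le_mul_of_nonneg_left hy (by positivity)
  linarith

lemma le_two_mul_of_forall_le_add_half {X : Type*} [TopologicalSpace X] {K : Set X}
    {N : X → ℝ} {A : ℝ} (hK : IsCompact K) (hN : ContinuousOn N K)
    (h : ∀ M, (∀ σ ∈ K, N σ ≤ M) → ∀ τ ∈ K, N τ ≤ A + M / 2) :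
    ∀ τ ∈ K, N τ ≤ 2 * A := by
  intro τ hτ
  obtain ⟨σ, hσ, hmax⟩ := hK.exists_isMaxOn ⟨τ, hτ⟩ hN
  have hστ : N τ ≤ N σ := hmax hτ
  linarith [h (N σ) (fun x hx => hmax hx) σ hσ]

lemma exists_mem_Ico_forall_integral_lt {w : ℝ → ℝ} {a c ε : ℝ} (hac : a < c)
    (hw : IntervalIntegrable w volume a c) (hw₀ : ∀ x, 0 ≤ w x) (hε : 0 < ε) :
    ∃ s ∈ Ico a c, ∀ t ∈ Icc s c, ∫ x in s..t, w x < ε := by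
  have hw' : IntegrableOn w (uIcc a c) := by
    rw [uIcc_of_le hac.le]
    exact (intervalIntegrable_iff_integrableOn_Icc_of_le hac.le).1 hw
  have hcont : ContinuousWithinAt (fun s => ∫ x in s..c, w x) (Icc a c) c := by
    have := continuousOn_primitive_interval_left hw' c right_mem_uIcc
    rwa [uIcc_of_le hac.le] at this
  rw [ContinuousWithinAt, nhdsWithin_Icc_eq_nhdsLE hac] at hcont
  have hsmall : ∀ᶠ s in 𝓝[<] c, ∫ x in s..c, w x < ε :=
    (hcont.mono_left (nhdsWithin_mono _ Iio_subset_Iic_self)).eventually_lt_const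
      (by simpa using hε)
  obtain ⟨s, hs, hsc⟩ := (hsmall.and (Ioo_mem_nhdsLT hac)).exists
  refine ⟨s, ⟨hsc.1.le, hsc.2⟩, fun t ht => lt_of_le_of_lt ?_ hs⟩
  exact integral_mono_interval le_rfl ht.1 ht.2 (Eventually.of_forall hw₀)
    (hw.mono_set (uIcc_subset_uIcc (Icc_subset_uIcc ⟨hsc.1.le, hsc.2.le⟩) right_mem_uIcc))

lemma integral_mul_add_mul_eq_sub {f g F G : ℝ → ℝ} {s t : ℝ}
    (hf : IntervalIntegrable f volume s t) (hg : IntervalIntegrable g volume s t)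
    (hF : ∀ x ∈ uIcc s t, F x = F s + ∫ τ in s..x, f τ)
    (hG : ∀ x ∈ uIcc s t, G x = G s + ∫ τ in s..x, g τ) :
    ∫ x in s..t, (f x * G x + F x * g x) = F t * G t - F s * G s := by
  set F' := fun x => F s + ∫ τ in s..x, f τ
  set G' := fun x => G s + ∫ τ in s..x, g τ
  have hF' : AbsolutelyContinuousOnInterval F' s t :=
    contDiffOn_const.absolutelyContinuousOnInterval.add
      (hf.absolutelyContinuousOnInterval_intervalIntegral left_mem_uIcc)
  have hG' : AbsolutelyContinuousOnInterval G' s t :=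
    contDiffOn_const.absolutelyContinuousOnInterval.add
      (hg.absolutelyContinuousOnInterval_intervalIntegral left_mem_uIcc)
  have hparts := hF'.integral_deriv_mul_eq_sub hG'
  have hF's : F' s = F s := by simp [F']
  have hG's : G' s = G s := by simp [G']
  have hF't : F' t = F t := (hF t right_mem_uIcc).symm
  have hG't : G' t = G t := (hG t right_mem_uIcc).symm
  rw [hF's, hG's, hF't, hG't] at hparts
  rw [← hparts]
  refine integral_congr_ae ?_
  filter_upwards [hf.ae_hasDerivAt_integral, hg.ae_hasDerivAt_integral] with x hfx hgx hx
  have hx' : x ∈ uIcc s t := uIoc_subset_uIcc hx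
  rw [((hfx hx' s left_mem_uIcc).const_add (F s)).deriv,
    ((hgx hx' s left_mem_uIcc).const_add (G s)).deriv, hF x hx', hG x hx']

lemma integral_pos_of_nonneg_of_not_ae_eq_zero {α : Type*} [MeasurableSpace α] {μ : Measure α}
    {f : α → ℝ} (hf : 0 ≤ᵐ[μ] f) (hfi : Integrable f μ) (h : ¬ f =ᵐ[μ] 0) :
    0 < ∫ x, f x ∂μ :=
  (integral_nonneg_of_ae hf).lt_of_ne fun h0 =>
    h ((integral_eq_zero_iff_of_nonneg_ae hf hfi).1 h0.symm)

lemma setIntegral_mul_pos {α : Type*} [MeasurableSpace α] {μ : Measure α} {r v : α → ℝ}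
    {s : Set α} (hs : MeasurableSet s) (hr : ∀ᵐ x ∂μ.restrict s, 0 ≤ r x)
    (hr₀ : ¬ ∀ᵐ x ∂μ.restrict s, r x = 0) (hv : ∀ x ∈ s, 0 < v x)
    (hi : IntegrableOn (fun x => r x * v x) s μ) : 0 < ∫ x in s, r x * v x ∂μ := by
  refine integral_pos_of_nonneg_of_not_ae_eq_zero ?_ hi fun h0 => hr₀ ?_
  · filter_upwards [hr, ae_restrict_mem hs] with x hrx hx using mul_nonneg hrx (hv x hx).le
  · filter_upwards [h0, ae_restrict_mem hs] with x hx0 hx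
    simpa [(hv x hx).ne'] using hx0

lemma integral_div_pos {f p : ℝ → ℝ} {s t : ℝ} (hst : s < t)
    (hp : ∀ᵐ x ∂volume.restrict (Ioc s t), 0 < p x) (hf : ∀ x ∈ Ioc s t, 0 < f x)
    (hfi : IntervalIntegrable (fun x => f x / p x) volume s t) :
    0 < ∫ x in s..t, f x / p x := by
  have hpos : ∀ᵐ x ∂volume.restrict (Ioc s t), 0 < f x / p x := by
    filter_upwards [hp, ae_restrict_mem measurableSet_Ioc] with x hpx hx
      using div_pos (hf x hx) hpx
  rw [integral_of_le hst.le]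
  refine integral_pos_of_nonneg_of_not_ae_eq_zero (hpos.mono fun _ => le_of_lt) hfi.1 fun h0 => ?_
  have : (ae (volume.restrict (Ioc s t))).NeBot := ae_restrict_neBot.2 (by simp [hst])
  obtain ⟨x, hx, hx0⟩ := (hpos.and h0).exists
  exact hx.ne' hx0

lemma nonneg_of_eq_add_integral_div_of_pos {Y f p : ℝ → ℝ} {s t : ℝ} (hst : s < t)
    (hp : ∀ᵐ x ∂volume.restrict (Icc s t), 0 < p x) (hf : ContinuousOn f (Icc s t))
    (hfi : IntervalIntegrable (fun x => f x / p x) volume s t)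
    (hY : ∀ x ∈ Icc s t, Y x = Y s + ∫ τ in s..x, f τ / p τ) (hYs : Y s = 0)
    (hpos : ∀ x ∈ Ioo s t, 0 < Y x) : 0 ≤ f s := by
  by_contra! hneg
  have hev : ∀ᶠ x in 𝓝[≥] s, f x < 0 ∧ x < t := by
    rw [← nhdsWithin_Icc_eq_nhdsGE hst]
    exact ((hf s (left_mem_Icc.2 hst.le)).eventually_lt_const hneg).and
      (nhdsWithin_le_nhds (Iio_mem_nhds hst))
  obtain ⟨x, hsx, hx⟩ := mem_nhdsGE_iff_exists_Icc_subset.1 hev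
  have hxt : x < t := (hx (right_mem_Icc.2 hsx.le)).2
  have hI : 0 < ∫ τ in s..x, -f τ / p τ := by
    refine integral_div_pos hsx (ae_restrict_of_ae_restrict_of_subset
      (Ioc_subset_Icc_self.trans (Icc_subset_Icc_right hxt.le)) hp)
      (fun τ hτ => neg_pos.2 (hx (Ioc_subset_Icc_self hτ)).1) ?_
    simpa only [neg_div, Pi.neg_def] using
      (hfi.mono_set (uIcc_subset_uIcc_left (Icc_subset_uIcc ⟨hsx.le, hxt.le⟩))).neg
  have hYx := hpos x ⟨hsx, hxt⟩
  rw [hY x ⟨hsx.le, hxt.le⟩, hYs, zero_add] at hYx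
  simp only [neg_div, intervalIntegral.integral_neg] at hI
  linarith

lemma nonpos_of_eq_add_integral_div_of_pos {Y f p : ℝ → ℝ} {s t : ℝ} (hst : s < t)
    (hp : ∀ᵐ x ∂volume.restrict (Icc s t), 0 < p x) (hf : ContinuousOn f (Icc s t))
    (hfi : IntervalIntegrable (fun x => f x / p x) volume s t)
    (hY : ∀ x ∈ Icc s t, Y t = Y x + ∫ τ in x..t, f τ / p τ) (hYt : Y t = 0)
    (hpos : ∀ x ∈ Ioo s t, 0 < Y x) : f t ≤ 0 := by
  by_contra! hpos'
  have hev : ∀ᶠ x in 𝓝[≤] t, 0 < f x ∧ s < x := by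
    rw [← nhdsWithin_Icc_eq_nhdsLE hst]
    exact ((hf t (right_mem_Icc.2 hst.le)).eventually_const_lt hpos').and
      (nhdsWithin_le_nhds (Ioi_mem_nhds hst))
  obtain ⟨x, hxt, hx⟩ := mem_nhdsLE_iff_exists_Icc_subset.1 hev
  have hsx : s < x := (hx (left_mem_Icc.2 hxt.le)).2
  have hI : 0 < ∫ τ in x..t, f τ / p τ :=
    integral_div_pos hxt (ae_restrict_of_ae_restrict_of_subset
      (Ioc_subset_Icc_self.trans (Icc_subset_Icc_left hsx.le)) hp)
      (fun τ hτ => (hx (Ioc_subset_Icc_self hτ)).1)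
      (hfi.mono_set (uIcc_subset_uIcc_right (Icc_subset_uIcc ⟨hsx.le, hxt.le⟩)))
  have hYx := hpos x ⟨hsx, hxt⟩
  rw [hY x ⟨hsx.le, hxt.le⟩] at hYt
  linarith

lemma exists_mul_pos_of_ne_zero {X : Type*} [TopologicalSpace X] {s : Set X} {f : X → ℝ}
    (hs : IsPreconnected s) (hf : ContinuousOn f s) (hne : ∀ x ∈ s, f x ≠ 0) :
    ∃ c : ℝ, ∀ x ∈ s, 0 < c * f x := by
  rcases s.eq_empty_or_nonempty with rfl | ⟨x₀, hx₀⟩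
  · exact ⟨1, fun x hx => hx.elim⟩
  refine ⟨f x₀, fun x hx => ?_⟩
  by_contra! hle
  have hzero : (0 : ℝ) ∈ f '' s := by
    rcases (hne x₀ hx₀).lt_or_gt with h₀ | h₀
    · exact hs.intermediate_value hx₀ hx hf ⟨h₀.le, by nlinarith⟩
    · exact hs.intermediate_value hx hx₀ hf ⟨by nlinarith, h₀.le⟩
  obtain ⟨w, hw, hw0⟩ := hzero
  exact hne w hw hw0

/-- Bounds the integrands `py / p` and `q y - l r y` of both integral equations by
`(|y| + |py|) * slWeight p q r l`. -/
noncomputable def slWeight (p q r : ℝ → ℝ) (l x : ℝ) : ℝ := |(p x)⁻¹| + |q x| + |l| * |r x|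

lemma intervalIntegrable_slWeight {p q r : ℝ → ℝ} {a b : ℝ} (l : ℝ)
    (hq : IntervalIntegrable q volume a b) (hr : IntervalIntegrable r volume a b)
    (hip : IntervalIntegrable (fun t => (p t)⁻¹) volume a b) :
    IntervalIntegrable (slWeight p q r l) volume a b :=
  (hip.abs.add hq.abs).add (hr.abs.const_mul |l|)

namespace IsRealSLSolution

variable {p q r : ℝ → ℝ} {a b l : ℝ} {y py : ℝ → ℝ}

theorem continuousOn_of_intervalIntegrable (hsol : IsRealSLSolution p q r a b l y py) {x : ℝ}
    (hxb : x ≤ b) (hg : IntervalIntegrable (fun t => py t / p t) volume a x) :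
    ContinuousOn y (Icc a x) :=
  continuousOn_of_eq_add_integral hg fun t ht => hsol.1 t ⟨ht.1, ht.2.trans hxb⟩

theorem continuousOn_quasiDeriv_of_intervalIntegrable (hsol : IsRealSLSolution p q r a b l y py)
    (hq : IntervalIntegrable q volume a b) (hr : IntervalIntegrable r volume a b) {x : ℝ}
    (hx : x ∈ Icc a b) (hg : IntervalIntegrable (fun t => py t / p t) volume a x) :
    ContinuousOn py (Icc a x) := by
  have hsub : uIcc a x ⊆ uIcc a b := uIcc_subset_uIcc left_mem_uIcc (Icc_subset_uIcc hx)
  refine continuousOn_of_eq_add_integral ?_ fun t ht => hsol.2 t ⟨ht.1, ht.2.trans hx.2⟩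
  exact intervalIntegrable_sub_of_continuousOn l hx.1 (hq.mono_set hsub) (hr.mono_set hsub)
    (hsol.continuousOn_of_intervalIntegrable hx.2 hg)

/-- Gronwall-type estimate: on `[s, τ]` the quantity `|y| + |py|` grows by at most
`M ∫ slWeight ≤ M / 2`, where `M` is its maximum on `[s, t]`; hence `M ≤ 2 (|y s| + |py s|)`. -/
theorem abs_add_abs_le_of_integral_slWeight_le (hsol : IsRealSLSolution p q r a b l y py)
    (hq : IntervalIntegrable q volume a b) (hr : IntervalIntegrable r volume a b)
    (hip : IntervalIntegrable (fun t => (p t)⁻¹) volume a b) {s t : ℝ} (has : a ≤ s)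
    (hst : s ≤ t) (htb : t ≤ b) (hg : IntervalIntegrable (fun t => py t / p t) volume a t)
    (hw : ∀ τ ∈ Icc s t, ∫ x in s..τ, slWeight p q r l x ≤ 1 / 2) :
    ∀ τ ∈ Icc s t, |y τ| + |py τ| ≤ 2 * (|y s| + |py s|) := by
  have hat : a ≤ t := has.trans hst
  have hsub : uIcc a t ⊆ uIcc a b := uIcc_subset_uIcc left_mem_uIcc (Icc_subset_uIcc ⟨hat, htb⟩)
  have hy := hsol.continuousOn_of_intervalIntegrable htb hg
  have hh := intervalIntegrable_sub_of_continuousOn l hat (hq.mono_set hsub) (hr.mono_set hsub) hy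
  have hpy := hsol.continuousOn_quasiDeriv_of_intervalIntegrable hq hr ⟨hat, htb⟩ hg
  have hs : s ∈ Icc a t := ⟨has, hst⟩
  refine le_two_mul_of_forall_le_add_half isCompact_Icc
    ((hy.abs.add hpy.abs).mono (Icc_subset_Icc_left has)) fun M hM τ hτ => ?_
  have hτ' : τ ∈ Icc a t := ⟨has.trans hτ.1, hτ.2⟩
  have hsτ : uIcc s τ ⊆ uIcc a t := uIcc_subset_uIcc (Icc_subset_uIcc hs) (Icc_subset_uIcc hτ')
  have hyτ := eq_add_integral_of_eq_add_integral hg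
    (fun x hx => hsol.1 x ⟨hx.1, hx.2.trans htb⟩) hs hτ'
  have hpyτ := eq_add_integral_of_eq_add_integral hh
    (fun x hx => hsol.2 x ⟨hx.1, hx.2.trans htb⟩) hs hτ'
  have hM₀ : 0 ≤ M := (by positivity : (0 : ℝ) ≤ |y s| + |py s|).trans (hM s ⟨le_rfl, hst⟩)
  have hgτ := hg.mono_set hsτ
  have hhτ := hh.mono_set hsτ
  have hbound : ∫ x in s..τ, (|py x / p x| + |q x * y x - l * r x * y x|) ≤ M * (1 / 2) :=
    calc _ ≤ ∫ x in s..τ, M * slWeight p q r l x := by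
          refine integral_mono_on hτ.1 (hgτ.abs.add hhτ.abs)
            (((intervalIntegrable_slWeight l hq hr hip).mono_set
              (hsτ.trans hsub)).const_mul M) fun x hx => ?_
          have hNx := hM x ⟨hx.1, hx.2.trans hτ.2⟩
          exact abs_div_add_abs_sub_le (by linarith [abs_nonneg (py x)])
            (by linarith [abs_nonneg (y x)])
      _ = M * ∫ x in s..τ, slWeight p q r l x := integral_const_mul _ _
      _ ≤ M * (1 / 2) := mul_le_mul_of_nonneg_left (hw τ hτ) hM₀
  rw [integral_add hgτ.abs hhτ.abs] at hbound
  rw [hyτ, hpyτ]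
  linarith [abs_add_le (y s) (∫ x in s..τ, py x / p x),
    abs_add_le (py s) (∫ x in s..τ, q x * y x - l * r x * y x),
    abs_integral_le_integral_abs (f := fun x => py x / p x) (μ := volume) hτ.1,
    abs_integral_le_integral_abs (f := fun x => q x * y x - l * r x * y x) (μ := volume) hτ.1]

theorem intervalIntegrable_div_of_forall_lt (hsol : IsRealSLSolution p q r a b l y py)
    (hq : IntervalIntegrable q volume a b) (hr : IntervalIntegrable r volume a b)
    (hip : IntervalIntegrable (fun t => (p t)⁻¹) volume a b) {c : ℝ} (hac : a < c) (hcb : c ≤ b)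
    (h : ∀ x ∈ Ico a c, IntervalIntegrable (fun t => py t / p t) volume a x) :
    IntervalIntegrable (fun t => py t / p t) volume a c := by
  have hsub : uIcc a c ⊆ uIcc a b := uIcc_subset_uIcc left_mem_uIcc (Icc_subset_uIcc ⟨hac.le, hcb⟩)
  obtain ⟨s, hs, hsw⟩ := exists_mem_Ico_forall_integral_lt hac
    ((intervalIntegrable_slWeight l hq hr hip).mono_set hsub)
    (fun x => by unfold slWeight; positivity) one_half_pos
  have hpy : ∀ x ∈ Ico a c, ContinuousOn py (Icc a x) := fun x hx =>
    hsol.continuousOn_quasiDeriv_of_intervalIntegrable hq hr ⟨hx.1, hx.2.le.trans hcb⟩ (h x hx)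
  obtain ⟨K, hK⟩ := isCompact_Icc.exists_bound_of_continuousOn (hpy s hs)
  have hbound : ∀ x ∈ Ico a c, ‖py x‖ ≤ max K (2 * (|y s| + |py s|)) := by
    intro x hx
    rcases le_total x s with hxs | hsx
    · exact (hK x ⟨hx.1, hxs⟩).trans (le_max_left _ _)
    · have := hsol.abs_add_abs_le_of_integral_slWeight_le hq hr hip hs.1 hsx (hx.2.le.trans hcb)
        (h x hx) (fun τ hτ => (hsw τ ⟨hτ.1, hτ.2.trans hx.2.le⟩).le) x ⟨hsx, le_rfl⟩
      rw [Real.norm_eq_abs]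
      exact le_max_of_le_right (by linarith [abs_nonneg (y x)])
  have hcont : ContinuousOn py (Ico a c) := continuousOn_of_locally_continuousOn fun x hx => by
    obtain ⟨x', hxx', hx'c⟩ := exists_between hx.2
    exact ⟨Iio x', isOpen_Iio, hxx',
      (hpy x' ⟨hx.1.trans hxx'.le, hx'c⟩).mono fun t ht => ⟨ht.1.1, ht.2.le⟩⟩
  have hip' : IntegrableOn (fun t => (p t)⁻¹) (Ico a c) :=
    (intervalIntegrable_iff_integrableOn_Ico_of_le hac.le).1 (hip.mono_set hsub)
  rw [intervalIntegrable_iff_integrableOn_Ico_of_le hac.le]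
  simp_rw [div_eq_mul_inv]
  exact hip'.bdd_mul (hcont.aestronglyMeasurable measurableSet_Ico)
    (ae_restrict_of_forall_mem measurableSet_Ico hbound)

theorem intervalIntegrable_div_of_forall_not (hsol : IsRealSLSolution p q r a b l y py)
    (hq : IntervalIntegrable q volume a b) (hr : IntervalIntegrable r volume a b)
    (hip : IntervalIntegrable (fun t => (p t)⁻¹) volume a b) {c : ℝ} (hac : a ≤ c) (hcb : c ≤ b)
    (hc : IntervalIntegrable (fun t => py t / p t) volume a c)
    (h : ∀ x ∈ Ioc c b, ¬ IntervalIntegrable (fun t => py t / p t) volume a x) :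
    IntervalIntegrable (fun t => py t / p t) volume a b := by
  -- beyond `c` the integral defining `y` takes its junk value
  have hconst : ∀ x ∈ Ioc c b, y x = y a := fun x hx => by
    rw [hsol.1 x ⟨hac.trans hx.1.le, hx.2⟩, integral_undef (h x hx), add_zero]
  have hac' : IntervalIntegrable (fun t => q t * y t - l * r t * y t) volume a c := by
    have hsub : uIcc a c ⊆ uIcc a b := uIcc_subset_uIcc left_mem_uIcc (Icc_subset_uIcc ⟨hac, hcb⟩)
    exact intervalIntegrable_sub_of_continuousOn l hac (hq.mono_set hsub) (hr.mono_set hsub)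
      (hsol.continuousOn_of_intervalIntegrable hcb hc)
  have hcb' : IntervalIntegrable (fun t => q t * y t - l * r t * y t) volume c b := by
    refine IntervalIntegrable.congr (fun t ht => ?_)
      (((hq.mul_const (y a)).sub ((hr.const_mul l).mul_const (y a))).mono_set
        (uIcc_subset_uIcc (Icc_subset_uIcc ⟨hac, hcb⟩) right_mem_uIcc))
    rw [uIoc_of_le hcb] at ht
    simp only [hconst t ht]
  exact intervalIntegrable_div_of_continuousOn (hac.trans hcb) hip
    (continuousOn_of_eq_add_integral (hac'.trans hcb') hsol.2)

/-- The junk value `0` of a non-integrable `∫ t in a..x, py t / p t` never occurs in `[a, b]`. -/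
theorem intervalIntegrable_div (hsol : IsRealSLSolution p q r a b l y py)
    (hq : IntervalIntegrable q volume a b) (hr : IntervalIntegrable r volume a b)
    (hip : IntervalIntegrable (fun t => (p t)⁻¹) volume a b) (hab : a ≤ b) :
    IntervalIntegrable (fun t => py t / p t) volume a b := by
  set A := {x ∈ Icc a b | IntervalIntegrable (fun t => py t / p t) volume a x}
  have haA : a ∈ A := ⟨left_mem_Icc.2 hab, .refl⟩
  have hA : BddAbove A := ⟨b, fun x hx => hx.1.2⟩
  have hac : a ≤ sSup A := le_csSup hA haA
  have hcb : sSup A ≤ b := csSup_le ⟨a, haA⟩ fun x hx => hx.1.2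
  have hc : IntervalIntegrable (fun t => py t / p t) volume a (sSup A) := by
    rcases hac.eq_or_lt with hac | hac
    · exact hac ▸ .refl
    refine hsol.intervalIntegrable_div_of_forall_lt hq hr hip hac hcb fun x hx => ?_
    obtain ⟨x', hx'A, hxx'⟩ := exists_lt_of_lt_csSup ⟨a, haA⟩ hx.2
    exact hx'A.2.mono_set (uIcc_subset_uIcc left_mem_uIcc (Icc_subset_uIcc ⟨hx.1, hxx'.le⟩))
  exact hsol.intervalIntegrable_div_of_forall_not hq hr hip hac hcb hc fun x hx hxA =>
    hx.1.not_ge (le_csSup hA ⟨⟨hac.trans hx.1.le, hx.2⟩, hxA⟩)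

theorem continuousOn (hsol : IsRealSLSolution p q r a b l y py)
    (hq : IntervalIntegrable q volume a b) (hr : IntervalIntegrable r volume a b)
    (hip : IntervalIntegrable (fun t => (p t)⁻¹) volume a b) (hab : a ≤ b) :
    ContinuousOn y (Icc a b) :=
  hsol.continuousOn_of_intervalIntegrable le_rfl (hsol.intervalIntegrable_div hq hr hip hab)

theorem intervalIntegrable_sub (hsol : IsRealSLSolution p q r a b l y py)
    (hq : IntervalIntegrable q volume a b) (hr : IntervalIntegrable r volume a b)
    (hip : IntervalIntegrable (fun t => (p t)⁻¹) volume a b) (hab : a ≤ b) :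
    IntervalIntegrable (fun t => q t * y t - l * r t * y t) volume a b :=
  intervalIntegrable_sub_of_continuousOn l hab hq hr (hsol.continuousOn hq hr hip hab)

theorem continuousOn_quasiDeriv (hsol : IsRealSLSolution p q r a b l y py)
    (hq : IntervalIntegrable q volume a b) (hr : IntervalIntegrable r volume a b)
    (hip : IntervalIntegrable (fun t => (p t)⁻¹) volume a b) (hab : a ≤ b) :
    ContinuousOn py (Icc a b) :=
  hsol.continuousOn_quasiDeriv_of_intervalIntegrable hq hr (right_mem_Icc.2 hab)
    (hsol.intervalIntegrable_div hq hr hip hab)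

theorem const_mul (hsol : IsRealSLSolution p q r a b l y py) (c : ℝ) :
    IsRealSLSolution p q r a b l (fun x => c * y x) (fun x => c * py x) := by
  refine ⟨fun x hx => ?_, fun x hx => ?_⟩
  · simp only [mul_div_assoc, intervalIntegral.integral_const_mul, hsol.1 x hx]
    ring
  · have (t : ℝ) : q t * (c * y t) - l * r t * (c * y t) = c * (q t * y t - l * r t * y t) := by
      ring
    simp only [this, intervalIntegral.integral_const_mul, hsol.2 x hx]
    ring

theorem lagrange_identity {m : ℝ} {u pu z pz : ℝ → ℝ} (hu : IsRealSLSolution p q r a b l u pu)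
    (hz : IsRealSLSolution p q r a b m z pz) (hq : IntervalIntegrable q volume a b)
    (hr : IntervalIntegrable r volume a b) (hip : IntervalIntegrable (fun t => (p t)⁻¹) volume a b)
    {x₁ x₂ : ℝ} (hx₁ : x₁ ∈ Icc a b) (hx₂ : x₂ ∈ Icc a b) :
    (pu x₂ * z x₂ - u x₂ * pz x₂) - (pu x₁ * z x₁ - u x₁ * pz x₁)
      = (m - l) * ∫ x in x₁..x₂, r x * u x * z x := by
  have hab : a ≤ b := hx₁.1.trans hx₁.2
  have hsub : uIcc x₁ x₂ ⊆ Icc a b := uIcc_subset_Icc hx₁ hx₂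
  have hsub' : uIcc x₁ x₂ ⊆ uIcc a b := uIcc_of_le hab ▸ hsub
  have rebase {Y f : ℝ → ℝ} (hf : IntervalIntegrable f volume a b)
      (hY : ∀ x ∈ Icc a b, Y x = Y a + ∫ t in a..x, f t) :
      ∀ x ∈ uIcc x₁ x₂, Y x = Y x₁ + ∫ t in x₁..x, f t := fun x hx =>
    eq_add_integral_of_eq_add_integral hf hY hx₁ (hsub hx)
  have hgu := hu.intervalIntegrable_div hq hr hip hab
  have hhu := hu.intervalIntegrable_sub hq hr hip hab
  have hgz := hz.intervalIntegrable_div hq hr hip hab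
  have hhz := hz.intervalIntegrable_sub hq hr hip hab
  have hu_c := (hu.continuousOn hq hr hip hab).mono hsub
  have hpu_c := (hu.continuousOn_quasiDeriv hq hr hip hab).mono hsub
  have hz_c := (hz.continuousOn hq hr hip hab).mono hsub
  have hpz_c := (hz.continuousOn_quasiDeriv hq hr hip hab).mono hsub
  rw [sub_sub_sub_comm,
    ← integral_mul_add_mul_eq_sub (hhu.mono_set hsub') (hgz.mono_set hsub') (rebase hhu hu.2)
      (rebase hgz hz.1),
    ← integral_mul_add_mul_eq_sub (hgu.mono_set hsub') (hhz.mono_set hsub') (rebase hgu hu.1)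
      (rebase hhz hz.2),
    ← integral_sub
      (((hhu.mono_set hsub').mul_continuousOn hz_c).add
        ((hgz.mono_set hsub').continuousOn_mul hpu_c))
      (((hgu.mono_set hsub').mul_continuousOn hpz_c).add
        ((hhz.mono_set hsub').continuousOn_mul hu_c)),
    ← intervalIntegral.integral_const_mul]
  congr 1 with x
  ring

theorem exists_nonpos_of_pos {m : ℝ} {u pu z pz : ℝ → ℝ}
    (hu : IsRealSLSolution p q r a b l u pu) (hz : IsRealSLSolution p q r a b m z pz)
    (hp : ∀ᵐ x ∂volume.restrict (Icc a b), 0 < p x) (hq : IntervalIntegrable q volume a b)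
    (hr : IntervalIntegrable r volume a b) (hip : IntervalIntegrable (fun t => (p t)⁻¹) volume a b)
    (hrpos : ∀ᵐ x ∂volume.restrict (Icc a b), 0 ≤ r x) (hlm : l < m) {x₁ x₂ : ℝ}
    (hx₁ : x₁ ∈ Icc a b) (hx₂ : x₂ ∈ Icc a b) (h₁₂ : x₁ < x₂) (hu₁ : u x₁ = 0) (hu₂ : u x₂ = 0)
    (hupos : ∀ x ∈ Ioo x₁ x₂, 0 < u x) (hrx : ¬ ∀ᵐ x ∂volume.restrict (Ioo x₁ x₂), r x = 0) :
    ∃ x ∈ Ioo x₁ x₂, z x ≤ 0 := by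
  by_contra! hzpos
  have hab : a ≤ b := hx₁.1.trans hx₁.2
  have hsub : Icc x₁ x₂ ⊆ Icc a b := Icc_subset_Icc hx₁.1 hx₂.2
  have hsub' : uIcc x₁ x₂ ⊆ uIcc a b := by rw [uIcc_of_le h₁₂.le, uIcc_of_le hab]; exact hsub
  have hg := hu.intervalIntegrable_div hq hr hip hab
  have hp' := ae_restrict_of_ae_restrict_of_subset hsub hp
  have hpu := (hu.continuousOn_quasiDeriv hq hr hip hab).mono hsub
  have hpu₁ : 0 ≤ pu x₁ := nonneg_of_eq_add_integral_div_of_pos h₁₂ hp' hpu (hg.mono_set hsub')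
    (fun x hx => eq_add_integral_of_eq_add_integral hg hu.1 hx₁ (hsub hx)) hu₁ hupos
  have hpu₂ : pu x₂ ≤ 0 := nonpos_of_eq_add_integral_div_of_pos h₁₂ hp' hpu (hg.mono_set hsub')
    (fun x hx => eq_add_integral_of_eq_add_integral hg hu.1 (hsub hx) hx₂) hu₂ hupos
  have hz_c := (hz.continuousOn hq hr hip hab).mono hsub
  have hz_nonneg : ∀ x ∈ Icc x₁ x₂, 0 ≤ z x := by
    rw [← closure_Ioo h₁₂.ne] at hz_c ⊢
    exact le_on_closure (fun x hx => (hzpos x hx).le) continuousOn_const hz_c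
  have hI : 0 < ∫ x in x₁..x₂, r x * u x * z x := by
    have hi := ((hr.mono_set hsub').mul_continuousOn
      ((hu.continuousOn hq hr hip hab).mono (uIcc_subset_Icc hx₁ hx₂))).mul_continuousOn
      ((hz.continuousOn hq hr hip hab).mono (uIcc_subset_Icc hx₁ hx₂))
    simp only [mul_assoc] at hi ⊢
    rw [integral_of_le h₁₂.le, integral_Ioc_eq_integral_Ioo]
    exact setIntegral_mul_pos measurableSet_Ioo
      (ae_restrict_of_ae_restrict_of_subset (Ioo_subset_Icc_self.trans hsub) hrpos) hrx
      (fun x hx => mul_pos (hupos x hx) (hzpos x hx)) (hi.1.mono_set Ioo_subset_Ioc_self)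
  have hW := hu.lagrange_identity hz hq hr hip hx₁ hx₂
  rw [hu₁, hu₂] at hW
  nlinarith [mul_nonneg hpu₁ (hz_nonneg x₁ (left_mem_Icc.2 h₁₂.le)),
    mul_nonneg (neg_nonneg.2 hpu₂) (hz_nonneg x₂ (right_mem_Icc.2 h₁₂.le)),
    mul_pos (sub_pos.2 hlm) hI]

end IsRealSLSolution

theorem sturm_comparison_general
    (p q r : ℝ → ℝ) (a b : ℝ)
    (hp : ∀ᵐ x ∂(volume.restrict (Set.Icc a b)), 0 < p x)
    (hq : IntegrableOn q (Set.Icc a b))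
    (hr : IntegrableOn r (Set.Icc a b))
    (hip : IntegrableOn (fun x => (p x)⁻¹) (Set.Icc a b))
    (hrpos : ∀ᵐ x ∂(volume.restrict (Set.Icc a b)), 0 ≤ r x)
    (l m : ℝ) (hlm : l < m)
    (u pu z pz : ℝ → ℝ)
    (hsolu : IsRealSLSolution p q r a b l u pu)
    (hsolz : IsRealSLSolution p q r a b m z pz)
    (x₁ x₂ : ℝ) (hx₁ : x₁ ∈ Set.Icc a b) (hx₂ : x₂ ∈ Set.Icc a b) (h₁₂ : x₁ < x₂)
    (hu₁ : u x₁ = 0) (hu₂ : u x₂ = 0)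
    -- x₁, x₂ are consecutive zeros of u :
    (hconsec : ∀ x ∈ Set.Ioo x₁ x₂, u x ≠ 0)
    -- r is not a.e. zero on (x₁, x₂) :
    (hrx : ¬ (∀ᵐ x ∂(volume.restrict (Set.Ioo x₁ x₂)), r x = 0)) :
    ∃ x ∈ Set.Ioo x₁ x₂, z x = 0 := by
  have hab : a ≤ b := hx₁.1.trans hx₁.2
  have hq' := (intervalIntegrable_iff_integrableOn_Icc_of_le hab).2 hq
  have hr' := (intervalIntegrable_iff_integrableOn_Icc_of_le hab).2 hr
  have hip' := (intervalIntegrable_iff_integrableOn_Icc_of_le hab).2 hip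
  have hIoo : Ioo x₁ x₂ ⊆ Icc a b := Ioo_subset_Icc_self.trans (Icc_subset_Icc hx₁.1 hx₂.2)
  by_contra! hz
  obtain ⟨cu, hcu⟩ := exists_mul_pos_of_ne_zero isPreconnected_Ioo
    ((hsolu.continuousOn hq' hr' hip' hab).mono hIoo) hconsec
  obtain ⟨cz, hcz⟩ := exists_mul_pos_of_ne_zero isPreconnected_Ioo
    ((hsolz.continuousOn hq' hr' hip' hab).mono hIoo) hz
  obtain ⟨x, hx, hzx⟩ := (hsolu.const_mul cu).exists_nonpos_of_pos (hsolz.const_mul cz) hp hq'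
    hr' hip' hrpos hlm hx₁ hx₂ h₁₂ (by simp [hu₁]) (by simp [hu₂]) hcu hrx
  exact hzx.not_gt (hcz x hx)

/-- Sturm comparison: with `r ≥ 0` a.e. and `λ < μ`, between consecutive zeros
`x₁ < x₂` of `u` (with `r` not a.e. zero there) the solution `z` for `μ` must vanish. -/
theorem sturm_comparison
    (p q r : ℝ → ℝ) (a b : ℝ) (hab : a < b)
    (hp : ∀ᵐ x ∂(volume.restrict (Set.Icc a b)), 0 < p x)
    (hq : IntegrableOn q (Set.Icc a b))
    (hr : IntegrableOn r (Set.Icc a b))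
    (hip : IntegrableOn (fun x => (p x)⁻¹) (Set.Icc a b))
    (hrpos : ∀ᵐ x ∂(volume.restrict (Set.Icc a b)), 0 ≤ r x)
    (hrint : 0 < ∫ x in a..b, r x)
    (l m : ℝ) (hlm : l < m)
    (u pu z pz : ℝ → ℝ)
    (hsolu : IsRealSLSolution p q r a b l u pu)
    (hsolz : IsRealSLSolution p q r a b m z pz)
    (hntu : ∃ x ∈ Set.Icc a b, u x ≠ 0)
    (hntz : ∃ x ∈ Set.Icc a b, z x ≠ 0)
    (x₁ x₂ : ℝ) (hx₁ : x₁ ∈ Set.Icc a b) (hx₂ : x₂ ∈ Set.Icc a b) (h₁₂ : x₁ < x₂)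
    (hu₁ : u x₁ = 0) (hu₂ : u x₂ = 0)
    -- x₁, x₂ are consecutive zeros of u :
    (hconsec : ∀ x ∈ Set.Ioo x₁ x₂, u x ≠ 0)
    -- r is not a.e. zero on (x₁, x₂) :
    (hrx : ¬ (∀ᵐ x ∂(volume.restrict (Set.Ioo x₁ x₂)), r x = 0)) :
    ∃ x ∈ Set.Ioo x₁ x₂, z x = 0 :=
  sturm_comparison_general p q r a b hp hq hr hip hrpos l m hlm u pu z pz hsolu hsolz x₁ x₂ hx₁ hx₂
    h₁₂ hu₁ hu₂ hconsec hrx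
end

section
/- Consider the Dirichlet problem -y'' + q y = λ r y on [0,2] with q ≡ -9π²/16, r(x) = 1 on [0,1], r(x) = -1 on (1,2]. Then λ = iμ is an eigenvalue for some real μ ≠ 0; i.e., this non-definite problem admits a purely imaginary eigenvalue. -/
/-!
Write `λ = ω² - 9π²/16` with `ω = α + iβ`. Then `λ` is purely imaginary exactly when
`α² - β² = 9π²/16`, in which case `λ = 2iαβ` and the equation on `(1,2]` reads `y'' = -ϖ² y` with
`ϖ = α - iβ`. The solution with `y(0) = 0` is `sin (ω t)` on `[0,1]`, continued past `1` by the
combination of `cos (ϖ (t-1))` and `sin (ϖ (t-1))` with the same Cauchy data. Then `ϖ y(2)` equals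
`ϖ sin ω cos ϖ + ω cos ω sin ϖ = 2 Re (ϖ sin ω cos ϖ) = α sin 2α + β sinh 2β`, a real function of
`β` which is negative at `β = 0` (where `α = 3π/4`) and positive at `β = 2`, hence vanishes at some
`β > 0`.
-/

open MeasureTheory Real Set Complex

section Gluing

variable {E : Type*} [NormedAddCommGroup E]

theorem hasDerivAt_ite_le_of_ne [NormedSpace ℝ E] {f g f' g' : ℝ → E} {c t : ℝ}
    (hf : HasDerivAt f (f' t) t) (hg : HasDerivAt g (g' t) t) (ht : t ≠ c) :
    HasDerivAt (fun s => if s ≤ c then f s else g s) (if t ≤ c then f' t else g' t) t := by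
  rcases ht.lt_or_gt with ht | ht
  · rw [if_pos ht.le]
    exact hf.congr_of_eventuallyEq <|
      Filter.mem_of_superset (Iio_mem_nhds ht) fun s hs => if_pos (le_of_lt hs)
  · rw [if_neg ht.not_ge]
    exact hg.congr_of_eventuallyEq <|
      Filter.mem_of_superset (Ioi_mem_nhds ht) fun s hs => if_neg (not_le.2 hs)

theorem Continuous.intervalIntegrable_ite_le {f g : ℝ → E} (hf : Continuous f)
    (hg : Continuous g) (c a b : ℝ) :
    IntervalIntegrable (fun t => if t ≤ c then f t else g t) volume a b :=
  intervalIntegrable_iff.2 <| Integrable.piecewise (s := Iic c) measurableSet_Iic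
    (intervalIntegrable_iff.1 (hf.intervalIntegrable a b)).integrableOn
    (intervalIntegrable_iff.1 (hg.intervalIntegrable a b)).integrableOn

theorem ite_le_eq_add_integral [NormedSpace ℝ E] [CompleteSpace E] {f g f' g' : ℝ → E} {c : ℝ}
    (hf : ∀ t, HasDerivAt f (f' t) t) (hg : ∀ t, HasDerivAt g (g' t) t)
    (hf' : Continuous f') (hg' : Continuous g') (hfg : f c = g c) (a b : ℝ) :
    (if b ≤ c then f b else g b) =
      (if a ≤ c then f a else g a) + ∫ t in a..b, if t ≤ c then f' t else g' t := by
  have hcont : Continuous fun t => if t ≤ c then f t else g t :=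
    (continuous_iff_continuousAt.2 fun t => (hf t).continuousAt).if_le
      (continuous_iff_continuousAt.2 fun t => (hg t).continuousAt) continuous_id continuous_const
      fun t ht => ht ▸ hfg
  rw [integral_eq_of_hasDerivAt_off_countable _ _ (countable_singleton c) hcont.continuousOn
    (fun t ht => hasDerivAt_ite_le_of_ne (hf t) (hg t) ht.2)
    (hf'.intervalIntegrable_ite_le hg' c a b)]
  abel

end Gluing

noncomputable def cosSinComb (κ A B : ℂ) (c t : ℝ) : ℂ :=
  A * cos (κ * (t - c)) + B * sin (κ * (t - c))

theorem continuous_cosSinComb (κ A B : ℂ) (c : ℝ) : Continuous (cosSinComb κ A B c) := by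
  unfold cosSinComb
  fun_prop

theorem hasDerivAt_cosSinComb (κ A B : ℂ) (c t : ℝ) :
    HasDerivAt (cosSinComb κ A B c) (cosSinComb κ (κ * B) (-(κ * A)) c t) t := by
  have hlin : HasDerivAt (fun z : ℂ => κ * (z - c)) κ t := by
    simpa using ((hasDerivAt_id (t : ℂ)).sub_const (c : ℂ)).const_mul κ
  have := ((hlin.ccos.const_mul A).add (hlin.csin.const_mul B)).comp_ofReal
  exact this.congr_deriv (by unfold cosSinComb; ring)

theorem hasDerivAt_cosSinComb_deriv (κ A B : ℂ) (c t : ℝ) :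
    HasDerivAt (cosSinComb κ (κ * B) (-(κ * A)) c) (-κ ^ 2 * cosSinComb κ A B c t) t :=
  (hasDerivAt_cosSinComb _ _ _ c t).congr_deriv (by unfold cosSinComb; ring)

/-- `y = sin (ω t)` on `[0,1]`, continued past `1` as a solution of `y'' = -ϖ² y` with the same
Cauchy data at `1`; `hW` says exactly that `ϖ * y 2 = 0`. -/
theorem exists_glued_dirichlet_solution (ω ϖ : ℂ) (hϖ : ϖ ≠ 0) (hsin : sin ω ≠ 0)
    (hW : ϖ * sin ω * cos ϖ + ω * cos ω * sin ϖ = 0) :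
    ∃ y yd : ℝ → ℂ, (∀ x, y x = y 0 + ∫ t in (0:ℝ)..x, yd t) ∧
      (∀ x, yd x = yd 0 + ∫ t in (0:ℝ)..x, -(if t ≤ 1 then ω ^ 2 else ϖ ^ 2) * y t) ∧
      y 1 ≠ 0 ∧ y 0 = 0 ∧ y 2 = 0 := by
  set u := cosSinComb ω 0 1 0
  set v := cosSinComb ϖ (sin ω) (ω * cos ω / ϖ) 1
  have hval : u 1 = v 1 := by simp [u, v, cosSinComb]
  have hder : cosSinComb ω (ω * 1) (-(ω * 0)) 0 1 =
      cosSinComb ϖ (ϖ * (ω * cos ω / ϖ)) (-(ϖ * sin ω)) 1 1 := by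
    simp only [cosSinComb, mul_one, ofReal_one, ofReal_zero, sub_zero, mul_zero, neg_zero, zero_mul,
      add_zero, sub_self, Complex.cos_zero, Complex.sin_zero]
    field_simp
  refine ⟨fun t => if t ≤ 1 then u t else v t,
    fun t => if t ≤ 1 then cosSinComb ω (ω * 1) (-(ω * 0)) 0 t
      else cosSinComb ϖ (ϖ * (ω * cos ω / ϖ)) (-(ϖ * sin ω)) 1 t,
    fun x => ite_le_eq_add_integral (hasDerivAt_cosSinComb _ _ _ _)
      (hasDerivAt_cosSinComb _ _ _ _) (continuous_cosSinComb _ _ _ _)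
      (continuous_cosSinComb _ _ _ _) hval 0 x,
    fun x => ?_, ?_, ?_, ?_⟩
  · refine (ite_le_eq_add_integral (hasDerivAt_cosSinComb_deriv _ _ _ _)
      (hasDerivAt_cosSinComb_deriv _ _ _ _) (continuous_const.mul (continuous_cosSinComb _ _ _ _))
      (continuous_const.mul (continuous_cosSinComb _ _ _ _)) hder 0 x).trans ?_
    congr 2 with t
    dsimp only
    split_ifs <;> rfl
  · simpa [u, cosSinComb] using hsin
  · simp [u, cosSinComb]
  · have hv : v 2 = (ϖ * sin ω * cos ϖ + ω * cos ω * sin ϖ) / ϖ := by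
      simp only [v, cosSinComb]
      rw [show ((2 : ℝ) : ℂ) - (1 : ℝ) = 1 by norm_num, mul_one]
      field_simp
    simp [hv, hW]

theorem Complex.sin_ne_zero_of_im_ne_zero {z : ℂ} (hz : z.im ≠ 0) : sin z ≠ 0 :=
  sin_ne_zero_iff.2 fun k hk => hz (by simp [hk])

theorem mul_sin_mul_cos_add_mul_cos_mul_sin (z w : ℂ) :
    w * sin z * cos w + z * cos z * sin w =
      ((z + w) * sin (z + w) - (z - w) * sin (z - w)) / 2 := by
  rw [Complex.sin_add, Complex.sin_sub]
  ring

theorem sub_mul_I_mul_sin_mul_cos_add (α β : ℝ) :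
    (α - β * I) * sin (α + β * I) * cos (α - β * I) +
        (α + β * I) * cos (α + β * I) * sin (α - β * I) =
      ((α * Real.sin (2 * α) + β * Real.sinh (2 * β) : ℝ) : ℂ) := by
  rw [mul_sin_mul_cos_add_mul_cos_mul_sin,
    show (α + β * I) + (α - β * I) = ((2 * α : ℝ) : ℂ) by push_cast; ring,
    show (α + β * I) - (α - β * I) = ((2 * β : ℝ) : ℂ) * I by push_cast; ring,
    sin_mul_I, ← ofReal_sin, ← ofReal_sinh]
  push_cast
  linear_combination (-(β : ℂ) * Complex.sinh (2 * β)) * I_sq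

/-- The characteristic function on the imaginary axis, parametrised by `β`: the eigenvalue
candidate is `λ = 2iαβ` with `α = √(9π²/16 + β²)`. -/
noncomputable def mingarelliChar (β : ℝ) : ℝ :=
  √(9 * π ^ 2 / 16 + β ^ 2) * Real.sin (2 * √(9 * π ^ 2 / 16 + β ^ 2)) + β * Real.sinh (2 * β)

theorem mingarelliChar_zero : mingarelliChar 0 = -(3 * π / 4) := by
  have hα : √(9 * π ^ 2 / 16 + 0 ^ 2) = 3 * π / 4 := by
    rw [show 9 * π ^ 2 / 16 + 0 ^ 2 = (3 * π / 4) ^ 2 by ring]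
    exact Real.sqrt_sq (by positivity)
  rw [mingarelliChar, hα, show 2 * (3 * π / 4) = π / 2 + π by ring, Real.sin_add_pi,
    Real.sin_pi_div_two]
  ring

theorem mingarelliChar_two_pos : 0 < mingarelliChar 2 := by
  set α := √(9 * π ^ 2 / 16 + 2 ^ 2) with hα_def
  have hα : α < 4 := by
    rw [hα_def, Real.sqrt_lt' (by norm_num)]
    nlinarith [Real.pi_lt_four, Real.pi_pos]
  have hsin : -α ≤ α * Real.sin (2 * α) := by
    nlinarith [Real.neg_one_le_sin (2 * α), Real.sqrt_nonneg (9 * π ^ 2 / 16 + 2 ^ 2)]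
  have hsinh : (4 : ℝ) ≤ Real.sinh (2 * 2) := by
    norm_num [Real.self_le_sinh_iff]
  change 0 < α * Real.sin (2 * α) + 2 * Real.sinh (2 * 2)
  linarith

theorem exists_pos_mingarelliChar_eq_zero : ∃ β : ℝ, 0 < β ∧ mingarelliChar β = 0 := by
  have hcont : Continuous mingarelliChar := by
    unfold mingarelliChar
    fun_prop
  have hsign : (0 : ℝ) ∈ Ioo (mingarelliChar 0) (mingarelliChar 2) :=
    ⟨by rw [mingarelliChar_zero]; linarith [Real.pi_pos], mingarelliChar_two_pos⟩
  obtain ⟨β, hβ, hzero⟩ := intermediate_value_Ioo (by norm_num) hcont.continuousOn hsign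
  exact ⟨β, hβ.1, hzero⟩

/-- Mingarelli's example: the Dirichlet problem `-y'' - (9π²/16) y = λ r y` on `[0,2]`
with `r = 1` on `[0,1]`, `r = -1` on `(1,2]`, has a purely imaginary eigenvalue
`λ = iμ`, `μ ≠ 0`. Solutions are taken in the absolutely continuous sense:
`y' (= p y'` with `p ≡ 1)` is AC with a.e. derivative `q y - λ r y`. -/
theorem mingarelli_imaginary_eigenvalue :
    ∃ μ : ℝ, μ ≠ 0 ∧
      ∃ y yd : ℝ → ℂ,
        (∀ x ∈ Set.Icc (0:ℝ) 2, y x = y 0 + ∫ t in (0:ℝ)..x, yd t) ∧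
        (∀ x ∈ Set.Icc (0:ℝ) 2, yd x = yd 0 + ∫ t in (0:ℝ)..x,
          (((-9 * π ^ 2 / 16 : ℝ) : ℂ) * y t -
            Complex.I * (μ : ℂ) * ((if t ≤ 1 then (1:ℝ) else -1) : ℂ) * y t)) ∧
        (∃ x ∈ Set.Icc (0:ℝ) 2, y x ≠ 0) ∧
        y 0 = 0 ∧ y 2 = 0 := by
  obtain ⟨β, hβ, hchar⟩ := exists_pos_mingarelliChar_eq_zero
  set α := √(9 * π ^ 2 / 16 + β ^ 2)
  have hα : (α : ℂ) ^ 2 = 9 * π ^ 2 / 16 + β ^ 2 := by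
    exact_mod_cast Real.sq_sqrt (by positivity : 0 ≤ 9 * π ^ 2 / 16 + β ^ 2)
  obtain ⟨y, yd, hy, hyd, hy1, hy0, hy2⟩ :=
    exists_glued_dirichlet_solution (α + β * I) (α - β * I)
      (fun h => hβ.ne' (by simpa using congrArg Complex.im h))
      (sin_ne_zero_of_im_ne_zero (by simpa using hβ.ne'))
      (by rw [sub_mul_I_mul_sin_mul_cos_add]; exact_mod_cast hchar)
  have hcoeff (t : ℝ) : -(if t ≤ 1 then (α + β * I) ^ 2 else (α - β * I) ^ 2) =
      ((-9 * π ^ 2 / 16 : ℝ) : ℂ) - I * ((2 * α * β : ℝ) : ℂ) * ((if t ≤ 1 then (1:ℝ) else -1) : ℂ) := by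
    split_ifs <;> push_cast <;> linear_combination -hα - (β : ℂ) ^ 2 * I_sq
  refine ⟨2 * α * β, by positivity, y, yd, fun x _ => hy x, fun x _ => (hyd x).trans ?_,
    ⟨1, ⟨zero_le_one, one_le_two⟩, hy1⟩, hy0, hy2⟩
  simp_rw [hcoeff, sub_mul]
end
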